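/- arXiv:math-ph/0510073 — 2 statements merged into one kernel-verified Lean document; each statement's English description precedes it below -/
import Mathlib

section
/- Exponential formula for the complete homogeneous generating function: H(t) = exp(∑_{k≥1} p_k t^k / k) as formal power series over ℚ in n variables. -/
open PowerSeries Finset

/-- The generating function `H(t) = ∑_{k ≥ 0} h_k t^k` of the complete homogeneous
symmetric polynomials in `n` variables over `ℚ`. -/
noncomputable def genH (n : ℕ) : PowerSeries (MvPolynomial (Fin n) ℚ) :=
  PowerSeries.mk fun k => MvPolynomial.hsymm (Fin n) ℚ k

/-- The series `∑_{k ≥ 1} p_k t^k / k`, where `p_k` is the `k`-th power sum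
symmetric polynomial in `n` variables over `ℚ`. -/
noncomputable def genPlog (n : ℕ) : PowerSeries (MvPolynomial (Fin n) ℚ) :=
  PowerSeries.mk fun k =>
    if k = 0 then 0 else ((k : ℚ)⁻¹ : ℚ) • MvPolynomial.psum (Fin n) ℚ k

/-- The formal power series exponential `exp S = ∑_{m ≥ 0} S^m / m!` of a power
series `S` with zero constant term, over a `ℚ`-algebra.  Since the constant term of
`S` vanishes, the coefficient of `t^d` only receives contributions from `m ≤ d`. -/
noncomputable def psExp {A : Type*} [CommRing A] [Algebra ℚ A] (S : PowerSeries A) :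
    PowerSeries A :=
  PowerSeries.mk fun d =>
    ∑ m ∈ Finset.range (d + 1), ((m.factorial : ℚ)⁻¹ : ℚ) • PowerSeries.coeff d (S ^ m)

/-!
Since `H(t) = ∏ᵢ (1 - xᵢ t)⁻¹`, the logarithmic derivative of `H` is
`∑ᵢ xᵢ / (1 - xᵢ t) = ∑_k p_{k+1} t^k`, which is the derivative `P'` of the series
`P = ∑_{k ≥ 1} p_k t^k / k`. On the other side `E = exp P` satisfies `E' = E P'` (differentiate
the partial sums of the exponential series). Two power series with constant term `1` solving
`F' = F P'` agree: `E` is a unit and `(F E⁻¹)' = 0`.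
-/

theorem coeff_pow_eq_zero_of_lt {R : Type*} [CommSemiring R] {S : R⟦X⟧}
    (hS : constantCoeff S = 0) {d m : ℕ} (h : d < m) : coeff d (S ^ m) = 0 :=
  X_pow_dvd_iff.mp (pow_dvd_pow_of_dvd (X_dvd_iff.mpr hS) m) d h

section Exp

variable {A : Type*} [CommRing A] [Algebra ℚ A]

noncomputable def expPartialSum (S : A⟦X⟧) (N : ℕ) : A⟦X⟧ :=
  ∑ m ∈ range N, (m.factorial : ℚ)⁻¹ • S ^ m

theorem constantCoeff_psExp (S : A⟦X⟧) : constantCoeff (psExp S) = 1 := by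
  rw [← coeff_zero_eq_constantCoeff_apply, psExp, coeff_mk]
  simp

theorem trunc_psExp {S : A⟦X⟧} (hS : constantCoeff S = 0) (N : ℕ) :
    trunc N (psExp S) = trunc N (expPartialSum S N) := by
  ext d
  rw [coeff_trunc, coeff_trunc]
  split_ifs with hd
  · simp only [psExp, coeff_mk, expPartialSum, map_sum, LinearMap.map_smul_of_tower]
    refine sum_subset (range_subset_range.2 hd) fun m _ hm => ?_
    rw [coeff_pow_eq_zero_of_lt hS (by simpa using hm), smul_zero]
  · rfl

theorem derivative_expPartialSum_succ (S : A⟦X⟧) (N : ℕ) :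
    d⁄dX A (expPartialSum S (N + 1)) = expPartialSum S N * d⁄dX A S := by
  rw [expPartialSum, expPartialSum, map_sum, sum_range_succ', sum_mul]
  refine (add_eq_left.2 (by simp)).trans (sum_congr rfl fun m _ => ?_)
  rw [Derivation.map_smul_of_tower, derivative_pow, add_tsub_cancel_right, mul_assoc,
    ← nsmul_eq_mul, ← Nat.cast_smul_eq_nsmul ℚ, smul_smul, smul_mul_assoc, Nat.factorial_succ]
  congr 1
  push_cast
  field_simp

theorem derivative_psExp {S : A⟦X⟧} (hS : constantCoeff S = 0) :
    d⁄dX A (psExp S) = psExp S * d⁄dX A S := by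
  suffices h : ∀ N, trunc N (d⁄dX A (psExp S)) = trunc N (psExp S * d⁄dX A S) by
    ext d
    simpa [coeff_trunc] using congr(Polynomial.coeff $(h (d + 1)) d)
  intro N
  calc trunc N (d⁄dX A (psExp S))
      = Polynomial.derivative (trunc (N + 1) (expPartialSum S (N + 1))) := by
        rw [trunc_derivative, trunc_psExp hS]
    _ = trunc N (expPartialSum S N * d⁄dX A S) := by
        rw [← trunc_derivative, derivative_expPartialSum_succ]
    _ = trunc N (psExp S * d⁄dX A S) := by
        rw [← trunc_trunc_mul, ← trunc_psExp hS, trunc_trunc_mul]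

end Exp

theorem eq_of_derivative_eq_mul {A : Type*} [CommRing A] [IsAddTorsionFree A] {F E G : A⟦X⟧}
    (hF : d⁄dX A F = F * G) (hE : d⁄dX A E = E * G) (hF₀ : constantCoeff F = 1)
    (hE₀ : constantCoeff E = 1) : F = E := by
  obtain ⟨u, rfl⟩ : IsUnit E := isUnit_iff_constantCoeff.2 (hE₀ ▸ isUnit_one)
  rw [← Units.mul_inv_eq_one]
  refine derivative.ext ?_ ?_
  · have hinv := (d⁄dX A).leibniz_of_mul_eq_one u.inv_mul
    rw [Derivation.leibniz, hinv, hE, hF, derivative_one, smul_eq_mul, smul_eq_mul, smul_eq_mul]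
    linear_combination (-(F * ↑u⁻¹ * G)) * u.inv_mul
  · rw [map_mul, hF₀, ← hE₀, ← map_mul, u.mul_inv]

theorem Derivation.map_prod_of_eq_mul {R A ι : Type*} [CommSemiring R] [CommSemiring A]
    [Algebra R A] (D : Derivation R A A) (s : Finset ι) {f c : ι → A}
    (h : ∀ i ∈ s, D (f i) = f i * c i) :
    D (∏ i ∈ s, f i) = (∏ i ∈ s, f i) * ∑ i ∈ s, c i := by
  classical
  induction s using Finset.induction_on with
  | empty => simp
  | insert a s ha ih =>
    rw [prod_insert ha, sum_insert ha, D.leibniz, smul_eq_mul, smul_eq_mul,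
      ih fun i hi => h i (mem_insert_of_mem hi), h a (mem_insert_self a s)]
    ring

theorem derivative_mk_pow {R : Type*} [CommSemiring R] (a : R) :
    d⁄dX R (mk fun k => a ^ k) = (mk fun k => a ^ k) * (C a * mk fun k => a ^ k) := by
  ext n
  rw [coeff_derivative, coeff_mk, coeff_mul]
  simp only [coeff_mk, coeff_C_mul]
  rw [sum_congr rfl fun p hp => show a ^ p.1 * (a * a ^ p.2) = a ^ (n + 1) by
    rw [← mem_antidiagonal.1 hp]; ring]
  simp [mul_comm]

theorem MvPolynomial.hsymm_eq_coeff_prod {σ R : Type*} [Fintype σ] [DecidableEq σ]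
    [CommSemiring R] (k : ℕ) :
    hsymm σ R k =
      PowerSeries.coeff k (∏ i, PowerSeries.mk fun j => (X i : MvPolynomial σ R) ^ j) := by
  let e : Sym σ k ≃ finsuppAntidiag univ k := (Sym.equivNatSum σ k).trans
    (Equiv.subtypeEquivRight fun l => by simp [mem_finsuppAntidiag, Finsupp.sum_fintype])
  rw [coeff_prod, hsymm, ← sum_coe_sort (finsuppAntidiag univ k)]
  refine Fintype.sum_equiv e _ _ fun s => ?_
  rw [prod_multiset_map_count, prod_subset (subset_univ _)]
  · simp [e]
  · intro i _ hi
    rw [Multiset.count_eq_zero_of_notMem (by simpa using hi), pow_zero]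

theorem genH_eq_prod (n : ℕ) :
    genH n = ∏ i, PowerSeries.mk fun k => (MvPolynomial.X i : MvPolynomial (Fin n) ℚ) ^ k := by
  refine PowerSeries.ext fun k => ?_
  rw [genH, coeff_mk, MvPolynomial.hsymm_eq_coeff_prod]

theorem constantCoeff_genPlog (n : ℕ) : constantCoeff (genPlog n) = 0 := by
  rw [← coeff_zero_eq_constantCoeff_apply, genPlog, coeff_mk, if_pos rfl]

theorem derivative_genPlog (n : ℕ) :
    d⁄dX _ (genPlog n) =
      ∑ i, C (MvPolynomial.X i) * PowerSeries.mk fun k => MvPolynomial.X i ^ k := by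
  refine PowerSeries.ext fun b => ?_
  rw [coeff_derivative, genPlog, coeff_mk, if_neg b.succ_ne_zero, map_sum]
  simp only [coeff_C_mul, coeff_mk, ← pow_succ', MvPolynomial.psum]
  rw [← Nat.cast_succ, smul_mul_assoc, mul_comm, ← nsmul_eq_mul, ← Nat.cast_smul_eq_nsmul ℚ,
    smul_smul, inv_mul_cancel₀ (by positivity), one_smul]

/-- Exponential formula: `H(t) = exp (∑_{k ≥ 1} p_k t^k / k)`. -/
theorem genH_eq_exp (n : ℕ) : genH n = psExp (genPlog n) := by
  refine eq_of_derivative_eq_mul (G := d⁄dX _ (genPlog n)) ?_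
    (derivative_psExp (constantCoeff_genPlog n)) ?_ (constantCoeff_psExp _)
  · rw [genH_eq_prod, derivative_genPlog]
    exact (d⁄dX _).map_prod_of_eq_mul _ fun i _ => derivative_mk_pow _
  · rw [genH, ← coeff_zero_eq_constantCoeff_apply, coeff_mk, MvPolynomial.hsymm_zero]
end

section
/- The phase-model L-matrix L_n(u) = [[u^{-1}I, φ_n†],[φ_n, uI]] satisfies the RLL bilinear relation R(u,v)(L_n(u) ⊗ L_n(v)) = (L_n(v) ⊗ L_n(u))R(u,v) with the 4×4 R-matrix R(u,v) = diag-block matrix with entries f(v,u) on corners, and middle 2×2 block [[g(v,u), 1],[0, g(v,u)]], where f(v,u) = u²/(u²−v²), g(v,u) = uv/(u²−v²). -/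
/-!
Once the scalars are pulled out, each of the sixteen entries of the two sides becomes an identity
between the weights that follows from `f v = g u` and `f u = u + g v`. The operators matter only
in the `((0,1),(0,1))` entry, the one containing the product `φ φ†`: replacing it by `1` leaves
`g (u/v - v/u) = 1`. No relation involving `φ† φ` is needed, so the argument works for any pair
`a, b` in a `K`-algebra with `b * a = 1`.
-/

open Kronecker

noncomputable section

/-- The one-dimensional Fock space, with basis `|n⟩`, `n ≥ 0`. -/
abbrev Fock := ℕ →₀ ℚ

/-- Operators on the Fock space. -/
abbrev FockOp := Module.End ℚ Fock

/-- The phase creation operator `φ† |n⟩ = |n+1⟩`. -/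
def phiDag : FockOp := Finsupp.lsum ℚ fun n => Finsupp.lsingle (n + 1)

/-- The phase annihilation operator `φ |n⟩ = |n-1⟩`, `φ |0⟩ = 0`. -/
def phi : FockOp := Finsupp.lsum ℚ fun n => if n = 0 then 0 else Finsupp.lsingle (n - 1)

/-- The phase-model `L`-matrix `L(u) = [[u⁻¹ I, φ†], [φ, u I]]`. -/
def Lmat (u : ℚ) : Matrix (Fin 2) (Fin 2) FockOp :=
  !![u⁻¹ • (1 : FockOp), phiDag; phi, u • (1 : FockOp)]

/-- The phase-model `R`-matrix `R(u,v) = [[f,0,0,0],[0,g,1,0],[0,0,g,0],[0,0,0,f]]`,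
with rows and columns indexed by `Fin 2 × Fin 2` in lexicographic order, where
`f = f(v,u)` and `g = g(v,u)` are scalars. -/
def Rmat (f g : ℚ) : Matrix (Fin 2 × Fin 2) (Fin 2 × Fin 2) FockOp :=
  fun p q =>
    if p = q then (if p.1 = p.2 then f • (1 : FockOp) else g • (1 : FockOp))
    else if p = ((0 : Fin 2), (1 : Fin 2)) ∧ q = ((1 : Fin 2), (0 : Fin 2)) then 1 else 0

namespace PhaseModel

variable {K A : Type*} [Field K] [Ring A] [Algebra K A]

def lMatrix (a b : A) (u : K) : Matrix (Fin 2) (Fin 2) A :=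
  !![u⁻¹ • (1 : A), a; b, u • (1 : A)]

def rMatrix (f g : K) : Matrix (Fin 2 × Fin 2) (Fin 2 × Fin 2) A :=
  fun p q =>
    if p = q then (if p.1 = p.2 then f • (1 : A) else g • (1 : A))
    else if p = ((0 : Fin 2), (1 : Fin 2)) ∧ q = ((1 : Fin 2), (0 : Fin 2)) then 1 else 0

theorem rMatrix_mul_kronecker_lMatrix {a b : A} (hba : b * a = 1) {u v f g : K}
    (hu : u ≠ 0) (hv : v ≠ 0) (hfg : f * v = g * u) (hf : f * u = u + g * v) :
    rMatrix f g * (lMatrix a b u ⊗ₖ lMatrix a b v) =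
      (lMatrix a b v ⊗ₖ lMatrix a b u) * rMatrix f g := by
  ext ⟨i, j⟩ ⟨k, l⟩
  simp only [Matrix.mul_apply, Fintype.sum_prod_type, Fin.sum_univ_two,
    Matrix.kroneckerMap_apply]
  fin_cases i <;> fin_cases j <;> fin_cases k <;> fin_cases l <;>
    simp [rMatrix, lMatrix, Prod.ext_iff, smul_smul, hba] <;>
    match_scalars <;> field_simp <;> grind

end PhaseModel

lemma phi_mul_phiDag : phi * phiDag = 1 := by
  ext n : 2
  simp [phi, phiDag]

/-- The `RLL` bilinear relation `R(u,v) (L(u) ⊗ L(v)) = (L(v) ⊗ L(u)) R(u,v)` for the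
phase model, with `f(v,u) = u²/(u² - v²)` and `g(v,u) = uv/(u² - v²)`. -/
theorem phase_RLL (u v : ℚ) (hu : u ≠ 0) (hv : v ≠ 0) (huv : u ^ 2 ≠ v ^ 2) :
    Rmat (u ^ 2 / (u ^ 2 - v ^ 2)) (u * v / (u ^ 2 - v ^ 2)) * (Lmat u ⊗ₖ Lmat v) =
      (Lmat v ⊗ₖ Lmat u) * Rmat (u ^ 2 / (u ^ 2 - v ^ 2)) (u * v / (u ^ 2 - v ^ 2)) := by
  have hd : u ^ 2 - v ^ 2 ≠ 0 := sub_ne_zero.mpr huv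
  exact PhaseModel.rMatrix_mul_kronecker_lMatrix phi_mul_phiDag hu hv
    (by field_simp) (by field_simp; ring)

end
end
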